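/- Let 0 < c < 1 and 0 < S < M. Under the Simple-LSH transformation with normalization factor M, the (S, c)-MIPS problem becomes a (d, c̃)-Euclidean near-neighbor problem on the unit sphere with distance threshold d = √(2 - 2S/M) and approximation factor c̃ = √((M - cS)/(M - S)); i.e., ⟨q, x⟩ = S gives ‖P(q) - P(x/M)‖ = √(2 - 2S/M) and ⟨q, x⟩ = cS gives ‖P(q) - P(x/M)‖ = c̃·√(2 - 2S/M). -/

import Mathlib

open Real RealInnerProductSpace

noncomputable def simpleLSH {d : ℕ} (y : EuclideanSpace ℝ (Fin d)) :
    EuclideanSpace ℝ (Fin (d + 1)) :=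
  (EuclideanSpace.equiv (Fin (d + 1)) ℝ).symm
    (Fin.snoc (EuclideanSpace.equiv (Fin d) ℝ y) (Real.sqrt (1 - ‖y‖ ^ 2)))

/-! `simpleLSH` sends the unit ball into the unit sphere, and the extra coordinate of `simpleLSH q`
vanishes when `‖q‖ = 1`, so `⟪simpleLSH q, simpleLSH y⟫ = ⟪q, y⟫` and hence
`‖simpleLSH q - simpleLSH y‖ ^ 2 = 2 - 2 * ⟪q, y⟫`. -/

section SimpleLSH

variable {d : ℕ}

@[simp]
lemma simpleLSH_apply_castSucc (y : EuclideanSpace ℝ (Fin d)) (i : Fin d) :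
    simpleLSH y i.castSucc = y i := by
  simp [simpleLSH, EuclideanSpace.equiv]

@[simp]
lemma simpleLSH_apply_last (y : EuclideanSpace ℝ (Fin d)) :
    simpleLSH y (Fin.last d) = √(1 - ‖y‖ ^ 2) := by
  simp [simpleLSH, EuclideanSpace.equiv]

lemma inner_simpleLSH (y z : EuclideanSpace ℝ (Fin d)) :
    ⟪simpleLSH y, simpleLSH z⟫ = ⟪y, z⟫ + √(1 - ‖y‖ ^ 2) * √(1 - ‖z‖ ^ 2) := by
  simp only [PiLp.inner_apply, Fin.sum_univ_castSucc, simpleLSH_apply_castSucc,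
    simpleLSH_apply_last, RCLike.inner_apply, conj_trivial, mul_comm]

lemma norm_simpleLSH {y : EuclideanSpace ℝ (Fin d)} (hy : ‖y‖ ≤ 1) : ‖simpleLSH y‖ = 1 := by
  have hy2 : ‖y‖ ^ 2 ≤ 1 := pow_le_one₀ (norm_nonneg y) hy
  rw [← pow_eq_one_iff_of_nonneg (norm_nonneg _) two_ne_zero, ← real_inner_self_eq_norm_sq,
    inner_simpleLSH, real_inner_self_eq_norm_sq, ← sq, sq_sqrt (by linarith)]
  ring

lemma norm_simpleLSH_sub_simpleLSH {q y : EuclideanSpace ℝ (Fin d)} (hq : ‖q‖ = 1)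
    (hy : ‖y‖ ≤ 1) : ‖simpleLSH q - simpleLSH y‖ = √(2 - 2 * ⟪q, y⟫) := by
  rw [← sqrt_sq (norm_nonneg _), norm_sub_sq_real, norm_simpleLSH hq.le, norm_simpleLSH hy,
    inner_simpleLSH, hq, one_pow, sub_self, sqrt_zero, zero_mul, add_zero]
  ring_nf

lemma norm_simpleLSH_sub_simpleLSH_smul {q x : EuclideanSpace ℝ (Fin d)} {M : ℝ} (hM : 0 < M)
    (hq : ‖q‖ = 1) (hx : ‖x‖ ≤ M) :
    ‖simpleLSH q - simpleLSH ((1 / M) • x)‖ = √(2 - 2 * ⟪q, x⟫ / M) := by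
  have hy : ‖(1 / M) • x‖ ≤ 1 := by
    rw [norm_smul, norm_div, norm_one, norm_of_nonneg hM.le, one_div_mul_eq_div]
    exact (div_le_one hM).2 hx
  rw [norm_simpleLSH_sub_simpleLSH hq hy, inner_smul_right]
  ring_nf

end SimpleLSH

theorem simpleLSH_to_euclidean_nn_general (d : ℕ) (c S M : ℝ) (q x : EuclideanSpace ℝ (Fin d))
    (hc1 : c < 1) (hS : 0 < S) (hSM : S < M)
    (hq : ‖q‖ = 1) (hx : ‖x‖ ≤ M) :
    (⟪q, x⟫ = S → ‖simpleLSH q - simpleLSH ((1 / M) • x)‖ = Real.sqrt (2 - 2 * S / M)) ∧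
    (⟪q, x⟫ = c * S → ‖simpleLSH q - simpleLSH ((1 / M) • x)‖ =
      Real.sqrt ((M - c * S) / (M - S)) * Real.sqrt (2 - 2 * S / M)) := by
  have hM : 0 < M := hS.trans hSM
  rw [norm_simpleLSH_sub_simpleLSH_smul hM hq hx]
  refine ⟨fun h => by rw [h], fun h => ?_⟩
  have hcS : c * S < M := by nlinarith
  rw [h, ← sqrt_mul (div_nonneg (by linarith) (by linarith))]
  congr 1
  field_simp [(sub_pos.2 hSM).ne']

theorem simpleLSH_to_euclidean_nn (d : ℕ) (c S M : ℝ) (q x : EuclideanSpace ℝ (Fin d))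
    (hc0 : 0 < c) (hc1 : c < 1) (hS : 0 < S) (hSM : S < M)
    (hq : ‖q‖ = 1) (hx : ‖x‖ ≤ M) :
    (⟪q, x⟫ = S → ‖simpleLSH q - simpleLSH ((1 / M) • x)‖ = Real.sqrt (2 - 2 * S / M)) ∧
    (⟪q, x⟫ = c * S → ‖simpleLSH q - simpleLSH ((1 / M) • x)‖ =
      Real.sqrt ((M - c * S) / (M - S)) * Real.sqrt (2 - 2 * S / M)) :=
  simpleLSH_to_euclidean_nn_general d c S M q x hc1 hS hSM hq hx
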